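/- Let N be a smooth manifold, g₀ a complete Riemannian metric on N, λ : ℝ × N → (0,∞) smooth, and g_t a smooth family of Riemannian metrics on N. If f : ℝ × N → (0,∞) is smooth and satisfies f(t,x)·g_t ≥ max{1, λ(t,x)}·g₀ as quadratic forms at every (t,x), then for every causal curve c(s) = (s, k(s)) of the metric h = −λ dt² + f g_t, the g₀-length of the spatial curve k on any interval [a,b] is at most b − a. -/

import Mathlib

open scoped Manifold
noncomputable section

variable {E : Type*} [NormedAddCommGroup E] [NormedSpace ℝ E]
  {H : Type*} [TopologicalSpace H] (I : ModelWithCorners ℝ E H)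
  {M : Type*} [TopologicalSpace M] [ChartedSpace H M] [IsManifold I (⊤ : ℕ∞) M]

/-- A (0,2)-tensor `g` is a Riemannian metric: symmetric, bilinear, positive definite. -/
def IsRiemannian (g : ∀ x : M, TangentSpace I x → TangentSpace I x → ℝ) : Prop :=
  (∀ x u v, g x u v = g x v u) ∧
  (∀ x (u v w : TangentSpace I x), g x (u + v) w = g x u w + g x v w) ∧
  (∀ x (c : ℝ) (u v : TangentSpace I x), g x (c • u) v = c * g x u v) ∧
  (∀ x (v : TangentSpace I x), v ≠ 0 → 0 < g x v v)

/-- Length of a curve `c` on `[a,b]` with respect to the Riemannian metric `g`. -/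
def rlength (g : ∀ x : M, TangentSpace I x → TangentSpace I x → ℝ) (c : ℝ → M) (a b : ℝ) : ℝ :=
  ∫ s in a..b,
    Real.sqrt (g (c s) (mfderiv 𝓘(ℝ, ℝ) I c s ((1:ℝ))) (mfderiv 𝓘(ℝ, ℝ) I c s ((1:ℝ))))

/-- Riemannian distance: infimum of lengths of smooth curves joining two points. -/
def rdist (g : ∀ x : M, TangentSpace I x → TangentSpace I x → ℝ) (x y : M) : ℝ :=
  sInf ((fun c : ℝ → M => rlength I g c 0 1) ''
    {c | ContMDiff 𝓘(ℝ, ℝ) I (⊤ : ℕ∞) c ∧ c 0 = x ∧ c 1 = y})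

/-- Metric completeness of the distance induced by a Riemannian metric `g`:
every Cauchy sequence for `rdist I g` converges for `rdist I g`. -/
def IsCompleteRM (g : ∀ x : M, TangentSpace I x → TangentSpace I x → ℝ) : Prop :=
  ∀ u : ℕ → M, (∀ ε > 0, ∃ K, ∀ m ≥ K, ∀ n ≥ K, rdist I g (u m) (u n) < ε) →
    ∃ x, ∀ ε > 0, ∃ K, ∀ n ≥ K, rdist I g (u n) x < ε

/-- A Lorentzian metric `L` with time orientation given by the timelike field `T`. -/
def IsLorentzian (L : ∀ x : M, TangentSpace I x → TangentSpace I x → ℝ)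
    (T : ∀ x : M, TangentSpace I x) : Prop :=
  (∀ x u v, L x u v = L x v u) ∧
  (∀ x (u v w : TangentSpace I x), L x (u + v) w = L x u w + L x v w) ∧
  (∀ x (c : ℝ) (u v : TangentSpace I x), L x (c • u) v = c * L x u v) ∧
  (∀ x, L x (T x) (T x) < 0)

/-- Future-directed timelike vector. -/
def FDTimelike (L : ∀ x : M, TangentSpace I x → TangentSpace I x → ℝ)
    (T : ∀ x : M, TangentSpace I x) (x : M) (v : TangentSpace I x) : Prop :=
  L x v v < 0 ∧ L x v (T x) < 0

/-- Future-directed causal vector. -/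
def FDCausal (L : ∀ x : M, TangentSpace I x → TangentSpace I x → ℝ)
    (T : ∀ x : M, TangentSpace I x) (x : M) (v : TangentSpace I x) : Prop :=
  L x v v ≤ 0 ∧ L x v (T x) < 0

def IsTimelikeCurveOn (L : ∀ x : M, TangentSpace I x → TangentSpace I x → ℝ)
    (T : ∀ x : M, TangentSpace I x) (c : ℝ → M) (s : Set ℝ) : Prop :=
  ∀ t ∈ s, MDifferentiableAt 𝓘(ℝ, ℝ) I c t ∧
    FDTimelike I L T (c t) (mfderiv 𝓘(ℝ, ℝ) I c t ((1:ℝ)))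

def IsCausalCurveOn (L : ∀ x : M, TangentSpace I x → TangentSpace I x → ℝ)
    (T : ∀ x : M, TangentSpace I x) (c : ℝ → M) (s : Set ℝ) : Prop :=
  ∀ t ∈ s, MDifferentiableAt 𝓘(ℝ, ℝ) I c t ∧
    FDCausal I L T (c t) (mfderiv 𝓘(ℝ, ℝ) I c t ((1:ℝ)))

/-- Chronological future `I⁺(A)`. -/
def chronFuture (L : ∀ x : M, TangentSpace I x → TangentSpace I x → ℝ)
    (T : ∀ x : M, TangentSpace I x) (A : Set M) : Set M :=
  {y | ∃ x ∈ A, ∃ c : ℝ → M, ∃ a b : ℝ, a < b ∧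
    IsTimelikeCurveOn I L T c (Set.Icc a b) ∧ c a = x ∧ c b = y}

/-- Chronological past `I⁻(A)`. -/
def chronPast (L : ∀ x : M, TangentSpace I x → TangentSpace I x → ℝ)
    (T : ∀ x : M, TangentSpace I x) (A : Set M) : Set M :=
  {y | ∃ x ∈ A, ∃ c : ℝ → M, ∃ a b : ℝ, a < b ∧
    IsTimelikeCurveOn I L T c (Set.Icc a b) ∧ c a = y ∧ c b = x}

/-- Causal future `J⁺(A)`. -/
def causalFuture (L : ∀ x : M, TangentSpace I x → TangentSpace I x → ℝ)
    (T : ∀ x : M, TangentSpace I x) (A : Set M) : Set M :=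
  A ∪ {y | ∃ x ∈ A, ∃ c : ℝ → M, ∃ a b : ℝ, a < b ∧
    IsCausalCurveOn I L T c (Set.Icc a b) ∧ c a = x ∧ c b = y}

/-- Causal past `J⁻(A)`. -/
def causalPast (L : ∀ x : M, TangentSpace I x → TangentSpace I x → ℝ)
    (T : ∀ x : M, TangentSpace I x) (A : Set M) : Set M :=
  A ∪ {y | ∃ x ∈ A, ∃ c : ℝ → M, ∃ a b : ℝ, a < b ∧
    IsCausalCurveOn I L T c (Set.Icc a b) ∧ c a = y ∧ c b = x}

/-- An inextendible timelike curve inside an open set `U`: defined on a nonempty open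
interval, timelike there, with image in `U`, and no continuous extension (within `U`)
to any frontier point of the interval. -/
def IsInextendibleTimelikeWithin (L : ∀ x : M, TangentSpace I x → TangentSpace I x → ℝ)
    (T : ∀ x : M, TangentSpace I x) (U : Set M) (c : ℝ → M) (s : Set ℝ) : Prop :=
  IsOpen s ∧ s.OrdConnected ∧ s.Nonempty ∧ (∀ t ∈ s, c t ∈ U) ∧
  IsTimelikeCurveOn I L T c s ∧
  ∀ t ∈ frontier s, ¬ ∃ p ∈ U, Filter.Tendsto c (nhdsWithin t s) (nhds p)

def IsInextendibleTimelike (L : ∀ x : M, TangentSpace I x → TangentSpace I x → ℝ)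
    (T : ∀ x : M, TangentSpace I x) (c : ℝ → M) (s : Set ℝ) : Prop :=
  IsInextendibleTimelikeWithin I L T Set.univ c s

def IsInextendibleCausal (L : ∀ x : M, TangentSpace I x → TangentSpace I x → ℝ)
    (T : ∀ x : M, TangentSpace I x) (c : ℝ → M) (s : Set ℝ) : Prop :=
  IsOpen s ∧ s.OrdConnected ∧ s.Nonempty ∧ IsCausalCurveOn I L T c s ∧
  ∀ t ∈ frontier s, ¬ ∃ p : M, Filter.Tendsto c (nhdsWithin t s) (nhds p)

/-- A Cauchy hypersurface for the spacetime restricted to the open set `U`. -/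
def IsCauchyHypersurfaceWithin (L : ∀ x : M, TangentSpace I x → TangentSpace I x → ℝ)
    (T : ∀ x : M, TangentSpace I x) (U : Set M) (S : Set M) : Prop :=
  ∀ c s, IsInextendibleTimelikeWithin I L T U c s → ∃! t, t ∈ s ∧ c t ∈ S

/-- A Cauchy hypersurface: met exactly once by every inextendible timelike curve. -/
def IsCauchyHypersurface (L : ∀ x : M, TangentSpace I x → TangentSpace I x → ℝ)
    (T : ∀ x : M, TangentSpace I x) (S : Set M) : Prop :=
  ∀ c s, IsInextendibleTimelike I L T c s → ∃! t, t ∈ s ∧ c t ∈ S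

/-- Global hyperbolicity: existence of a Cauchy hypersurface. -/
def GloballyHyperbolic (L : ∀ x : M, TangentSpace I x → TangentSpace I x → ℝ)
    (T : ∀ x : M, TangentSpace I x) : Prop :=
  ∃ S : Set M, IsCauchyHypersurface I L T S

section TwoManifolds

variable {E' : Type*} [NormedAddCommGroup E'] [NormedSpace ℝ E'] {H' : Type*}
  [TopologicalSpace H'] (I' : ModelWithCorners ℝ E' H') {M' : Type*} [TopologicalSpace M']
  [ChartedSpace H' M'] [IsManifold I' (⊤ : ℕ∞) M']

/-- `φ` restricts to an isometry of (pseudo-)metrics from `U ⊆ M` onto `V ⊆ M'`. -/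
def IsIsometryOn (L : ∀ x : M, TangentSpace I x → TangentSpace I x → ℝ)
    (L' : ∀ x : M', TangentSpace I' x → TangentSpace I' x → ℝ)
    (φ : M → M') (U : Set M) (V : Set M') : Prop :=
  ContMDiffOn I I' (⊤ : ℕ∞) φ U ∧ Set.BijOn φ U V ∧
  ∀ x ∈ U, ∀ u v : TangentSpace I x,
    L' (φ x) (mfderiv I I' φ x u) (mfderiv I I' φ x v) = L x u v

/-- Two spacetimes are future-isometric: the chronological futures of some Cauchy
hypersurfaces are isometric. -/
def FutureIsometric (L : ∀ x : M, TangentSpace I x → TangentSpace I x → ℝ)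
    (T : ∀ x : M, TangentSpace I x)
    (L' : ∀ x : M', TangentSpace I' x → TangentSpace I' x → ℝ)
    (T' : ∀ x : M', TangentSpace I' x) : Prop :=
  ∃ (S : Set M) (S' : Set M'),
    IsCauchyHypersurface I L T S ∧ IsCauchyHypersurface I' L' T' S' ∧
    ∃ φ : M → M',
      IsIsometryOn I I' L L' φ (chronFuture I L T S) (chronFuture I' L' T' S')

/-- Two spacetimes are past-isometric: the chronological pasts of some Cauchy
hypersurfaces are isometric. -/
def PastIsometric (L : ∀ x : M, TangentSpace I x → TangentSpace I x → ℝ)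
    (T : ∀ x : M, TangentSpace I x)
    (L' : ∀ x : M', TangentSpace I' x → TangentSpace I' x → ℝ)
    (T' : ∀ x : M', TangentSpace I' x) : Prop :=
  ∃ (S : Set M) (S' : Set M'),
    IsCauchyHypersurface I L T S ∧ IsCauchyHypersurface I' L' T' S' ∧
    ∃ φ : M → M',
      IsIsometryOn I I' L L' φ (chronPast I L T S) (chronPast I' L' T' S')

end TwoManifolds

/-- The warped-product Lorentzian metric `-λ dt² + f g_t` on `ℝ × M`. -/
def warped (lam f : ℝ × M → ℝ)
    (gt : ℝ → ∀ x : M, TangentSpace I x → TangentSpace I x → ℝ) :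
    ∀ p : ℝ × M, TangentSpace (𝓘(ℝ, ℝ).prod I) p → TangentSpace (𝓘(ℝ, ℝ).prod I) p → ℝ :=
  fun p u v => -(lam p) * u.1 * v.1 + f p * gt p.1 p.2 u.2 v.2

/-- The canonical future time orientation `∂_t` on `ℝ × M`. -/
def timeVec : ∀ p : ℝ × M, TangentSpace (𝓘(ℝ, ℝ).prod I) p := fun _ => ((1:ℝ), (0:E))

end

/-! Along a causal graph `s ↦ (s, k s)` the velocity is `(1, k')`, so causality reads
`f g_t(k', k') ≤ λ`. The domination then gives `max{1, λ} g₀(k', k') ≤ λ ≤ max{1, λ}`, i.e. `k` has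
`g₀`-speed at most one, and integrating the speed bound over `[a, b]` bounds the length. -/

variable {E : Type*} [NormedAddCommGroup E] [NormedSpace ℝ E]
  {H : Type*} [TopologicalSpace H] (I : ModelWithCorners ℝ E H)
  {M : Type*} [TopologicalSpace M] [ChartedSpace H M]

theorem mfderiv_graph_apply_one {k : ℝ → M} {s : ℝ} (hk : MDifferentiableAt 𝓘(ℝ, ℝ) I k s) :
    mfderiv 𝓘(ℝ, ℝ) (𝓘(ℝ, ℝ).prod I) (fun u => (u, k u)) s (1 : ℝ) =
      ((1 : ℝ), mfderiv 𝓘(ℝ, ℝ) I k s (1 : ℝ)) := by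
  have hgraph : mfderiv 𝓘(ℝ, ℝ) (𝓘(ℝ, ℝ).prod I) (fun u => (u, k u)) s =
      (mfderiv 𝓘(ℝ, ℝ) 𝓘(ℝ, ℝ) id s).prod (mfderiv 𝓘(ℝ, ℝ) I k s) :=
    mdifferentiableAt_id.mfderiv_prod hk
  rw [hgraph, mfderiv_id]
  rfl

theorem le_one_of_max_one_mul_le {l q : ℝ} (h : max 1 l * q ≤ l) : q ≤ 1 :=
  le_of_mul_le_mul_left (by simpa using h.trans (le_max_right 1 l))
    (one_pos.trans_le (le_max_left 1 l))

theorem rlength_le_mul_of_sqrt_le {g : ∀ x : M, TangentSpace I x → TangentSpace I x → ℝ}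
    {c : ℝ → M} {a b C : ℝ} (hab : a ≤ b)
    (hC : ∀ s ∈ Set.Ioc a b,
      √(g (c s) (mfderiv 𝓘(ℝ, ℝ) I c s (1 : ℝ)) (mfderiv 𝓘(ℝ, ℝ) I c s (1 : ℝ))) ≤ C) :
    rlength I g c a b ≤ C * (b - a) := by
  have hnorm := intervalIntegral.norm_integral_le_of_norm_le_const (a := a) (b := b)
    fun s hs => (Real.norm_of_nonneg (Real.sqrt_nonneg _)).trans_le
      (hC s (Set.uIoc_of_le hab ▸ hs))
  rw [abs_of_nonneg (sub_nonneg.2 hab)] at hnorm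
  exact (le_abs_self _).trans hnorm

theorem le_one_of_warped_nonpos {g₀ : ∀ x : M, TangentSpace I x → TangentSpace I x → ℝ}
    {lam f : ℝ × M → ℝ} {gt : ℝ → ∀ x : M, TangentSpace I x → TangentSpace I x → ℝ}
    {t : ℝ} {x : M} {v : TangentSpace I x}
    (hdom : max 1 (lam (t, x)) * g₀ x v v ≤ f (t, x) * gt t x v v)
    (hcausal : warped I lam f gt (t, x) ((1 : ℝ), v) ((1 : ℝ), v) ≤ 0) :
    g₀ x v v ≤ 1 := by
  simp only [warped, mul_one] at hcausal
  exact le_one_of_max_one_mul_le (by linarith)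

variable [IsManifold I (⊤ : ℕ∞) M]

theorem causal_curve_spatial_length_bound
    (g₀ : ∀ x : M, TangentSpace I x → TangentSpace I x → ℝ)
    (lam f : ℝ × M → ℝ)
    (gt : ℝ → ∀ x : M, TangentSpace I x → TangentSpace I x → ℝ)
    (hdom : ∀ (t : ℝ) (x : M) (v : TangentSpace I x),
      max 1 (lam (t, x)) * g₀ x v v ≤ f (t, x) * gt t x v v)
    (k : ℝ → M)
    (hdiff : MDifferentiable 𝓘(ℝ, ℝ) (𝓘(ℝ, ℝ).prod I) (fun s => (s, k s)))
    (hcausal : ∀ s : ℝ,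
      warped I lam f gt (s, k s)
        (mfderiv 𝓘(ℝ, ℝ) (𝓘(ℝ, ℝ).prod I) (fun u => (u, k u)) s ((1:ℝ)))
        (mfderiv 𝓘(ℝ, ℝ) (𝓘(ℝ, ℝ).prod I) (fun u => (u, k u)) s ((1:ℝ))) ≤ 0 ∧
      0 < (mfderiv 𝓘(ℝ, ℝ) (𝓘(ℝ, ℝ).prod I) (fun u => (u, k u)) s ((1:ℝ))).1) :
    ∀ a b : ℝ, a ≤ b → rlength I g₀ k a b ≤ b - a := by
  intro a b hab
  refine (rlength_le_mul_of_sqrt_le I hab fun s _ => ?_).trans_eq (one_mul _)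
  have hvelocity := mfderiv_graph_apply_one I (hdiff s).snd
  exact Real.sqrt_le_one.2
    (le_one_of_warped_nonpos I (hdom s (k s) _) (hvelocity ▸ (hcausal s).1))
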